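/- Let G and H be simple graphs, u ∈ V(G) and v ∈ V(H) with deg_G(u) ≥ 2 and deg_H(v) ≥ 2. Then Cc_{(u,v)}(G × H) ≤ Cc_u(G) · Cc_v(H), with equality if and only if Cc_u(G) = 0 or Cc_v(H) = 0. -/

import Mathlib

variable {α β : Type*}

/-- Tensor (categorical) product of simple graphs. -/
def tensorProdG (G : SimpleGraph α) (H : SimpleGraph β) : SimpleGraph (α × β) where
  Adj x y := G.Adj x.1 y.1 ∧ H.Adj x.2 y.2
  symm := ⟨fun _ _ h => ⟨h.1.symm, h.2.symm⟩⟩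
  loopless := ⟨fun x h => G.loopless.irrefl x.1 h.1⟩

instance (G : SimpleGraph α) (H : SimpleGraph β) [DecidableRel G.Adj] [DecidableRel H.Adj] :
    DecidableRel (tensorProdG G H).Adj := fun x y =>
    inferInstanceAs (Decidable (G.Adj x.1 y.1 ∧ H.Adj x.2 y.2))

/-- Number of triangles incident to `u`: edges of the induced neighborhood. -/
noncomputable def triCount (G : SimpleGraph α) [Fintype α] (u : α) : ℕ :=
  Nat.card (SimpleGraph.induce (G.neighborSet u) G).edgeSet

/-- Local clustering coefficient. -/
noncomputable def locCc (G : SimpleGraph α) [Fintype α] [DecidableRel G.Adj] (u : α) : ℝ :=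
  if 2 ≤ G.degree u then (triCount G u : ℝ) / ((G.degree u).choose 2) else 0

/-- Global clustering coefficient. -/
noncomputable def globCc (G : SimpleGraph α) [Fintype α] [DecidableRel G.Adj] : ℝ :=
  (∑ v, locCc G v) / (Fintype.card α)

/-- Minimum degree of the induced neighborhood of `u`. -/
noncomputable def nbrMinDeg (G : SimpleGraph α) [Fintype α] [DecidableRel G.Adj] (u : α) : ℕ :=
  (SimpleGraph.induce (G.neighborSet u) G).minDegree

/-- Average degree, as a real number. -/
noncomputable def avgDeg (G : SimpleGraph α) [Fintype α] [DecidableRel G.Adj] : ℝ :=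
  (∑ v, (G.degree v : ℝ)) / (Fintype.card α)

/-! The neighbourhood of `(u, v)` in `G × H` is `N(u) × N(v)`, and a dart of the graph induced on it
is exactly a pair of darts of the graphs induced on `N(u)` and `N(v)`. Counting darts gives
`t(u, v) = 2 t(u) t(v)`, while `deg (u, v) = deg u · deg v`; hence
`Cc_(u,v) = c · Cc_u · Cc_v` with `c = 2 C(deg u, 2) C(deg v, 2) / C(deg u · deg v, 2)`,
and `c < 1` as soon as both degrees are at least `2`. -/

open SimpleGraph

theorem Nat.two_mul_choose_two_mul_choose_two_lt {m n : ℕ} (hm : 2 ≤ m) (hn : 2 ≤ n) :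
    2 * m.choose 2 * n.choose 2 < (m * n).choose 2 := by
  have key : (2 * m.choose 2 * n.choose 2 : ℝ) < ((m * n).choose 2 : ℕ) := by
    have hm' : (2 : ℝ) ≤ m := by exact_mod_cast hm
    have hn' : (2 : ℝ) ≤ n := by exact_mod_cast hn
    rw [Nat.cast_choose_two, Nat.cast_choose_two, Nat.cast_choose_two]
    push_cast
    -- the difference of the two sides is `m n (m + n - 2) / 2`
    nlinarith [mul_pos (mul_pos (by linarith : (0 : ℝ) < m) (by linarith : (0 : ℝ) < n))
      (by linarith : (0 : ℝ) < m + n - 2)]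
  exact_mod_cast key

section

variable (G : SimpleGraph α) (H : SimpleGraph β)

def tensorProdGNeighborDartEquiv (u : α) (v : β) :
    ((tensorProdG G H).induce ((tensorProdG G H).neighborSet (u, v))).Dart ≃
      (G.induce (G.neighborSet u)).Dart × (H.induce (H.neighborSet v)).Dart where
  toFun d := (⟨(⟨d.fst.val.1, d.fst.prop.1⟩, ⟨d.snd.val.1, d.snd.prop.1⟩), d.adj.1⟩,
              ⟨(⟨d.fst.val.2, d.fst.prop.2⟩, ⟨d.snd.val.2, d.snd.prop.2⟩), d.adj.2⟩)
  invFun p := ⟨(⟨(p.1.fst.val, p.2.fst.val), ⟨p.1.fst.prop, p.2.fst.prop⟩⟩,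
               ⟨(p.1.snd.val, p.2.snd.val), ⟨p.1.snd.prop, p.2.snd.prop⟩⟩),
               ⟨p.1.adj, p.2.adj⟩⟩
  left_inv _ := rfl
  right_inv _ := rfl

variable [Fintype α] [Fintype β]

theorem two_mul_triCount (u : α) :
    2 * triCount G u = Nat.card (G.induce (G.neighborSet u)).Dart := by
  classical
  rw [Nat.card_eq_fintype_card, dart_card_eq_twice_card_edges, triCount, Nat.card_eq_fintype_card,
    edgeFinset_card]

theorem triCount_tensorProdG (u : α) (v : β) :
    triCount (tensorProdG G H) (u, v) = 2 * (triCount G u * triCount H v) := by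
  have h := Nat.card_congr (tensorProdGNeighborDartEquiv G H u v)
  rw [Nat.card_prod, ← two_mul_triCount, ← two_mul_triCount, ← two_mul_triCount] at h
  linarith

variable [DecidableRel G.Adj] [DecidableRel H.Adj]

theorem tensorProdG_neighborFinset (u : α) (v : β) :
    (tensorProdG G H).neighborFinset (u, v) = G.neighborFinset u ×ˢ H.neighborFinset v := by
  ext ⟨a, b⟩
  simp only [mem_neighborFinset, Finset.mem_product]
  rfl

theorem tensorProdG_degree (u : α) (v : β) :
    (tensorProdG G H).degree (u, v) = G.degree u * H.degree v := by
  rw [degree, tensorProdG_neighborFinset, Finset.card_product, degree, degree]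

end

variable [Fintype α] [Fintype β] (G : SimpleGraph α) (H : SimpleGraph β)
  [DecidableRel G.Adj] [DecidableRel H.Adj]

theorem locCc_nonneg (u : α) : 0 ≤ locCc G u := by
  unfold locCc
  split_ifs <;> positivity

theorem locCc_tensorProdG (u : α) (v : β) (hu : 2 ≤ G.degree u) (hv : 2 ≤ H.degree v) :
    locCc (tensorProdG G H) (u, v) =
      2 * (G.degree u).choose 2 * (H.degree v).choose 2 / (G.degree u * H.degree v).choose 2 *
        (locCc G u * locCc H v) := by
  have huv : 2 ≤ (tensorProdG G H).degree (u, v) := by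
    rw [tensorProdG_degree]
    exact hu.trans (Nat.le_mul_of_pos_right _ (by omega))
  have hCu : ((G.degree u).choose 2 : ℝ) ≠ 0 := by exact_mod_cast (Nat.choose_pos hu).ne'
  have hCv : ((H.degree v).choose 2 : ℝ) ≠ 0 := by exact_mod_cast (Nat.choose_pos hv).ne'
  rw [locCc, locCc, locCc, if_pos hu, if_pos hv, if_pos huv, tensorProdG_degree,
    triCount_tensorProdG]
  push_cast
  field_simp

theorem tensor_locCc_le (u : α) (v : β) (hu : 2 ≤ G.degree u) (hv : 2 ≤ H.degree v) :
    locCc (tensorProdG G H) (u, v) ≤ locCc G u * locCc H v ∧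
      (locCc (tensorProdG G H) (u, v) = locCc G u * locCc H v ↔
        locCc G u = 0 ∨ locCc H v = 0) := by
  have hc : 2 * (G.degree u).choose 2 * (H.degree v).choose 2 /
      ((G.degree u * H.degree v).choose 2 : ℝ) < 1 := by
    have hlt := Nat.two_mul_choose_two_mul_choose_two_lt hu hv
    rw [div_lt_one (by exact_mod_cast Nat.zero_lt_of_lt hlt)]
    exact_mod_cast hlt
  rw [locCc_tensorProdG G H u v hu hv, ← mul_eq_zero]
  refine ⟨mul_le_of_le_one_left (mul_nonneg (locCc_nonneg G u) (locCc_nonneg H v)) hc.le,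
    fun h => ?_, fun h => by rw [h, mul_zero]⟩
  by_contra hx
  exact hc.ne ((mul_eq_right₀ hx).1 h)
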